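/- For m > 1, the center of the Baumslag-Solitar group B(m,m) is the infinite cyclic subgroup generated by bᵐ. -/

import Mathlib

/-- The defining relation of the Baumslag-Solitar group `B(m,n)`:
`a⁻¹ bᵐ a = bⁿ`, where `a` is `FreeGroup.of false` and `b` is `FreeGroup.of true`. -/
def BSrel (m n : ℤ) : Set (FreeGroup Bool) :=
  {(FreeGroup.of false)⁻¹ * (FreeGroup.of true) ^ m * FreeGroup.of false *
    ((FreeGroup.of true) ^ n)⁻¹}

/-- The Baumslag-Solitar group `B(m,n) = ⟨a, b | a⁻¹ bᵐ a = bⁿ⟩`. -/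
abbrev BS (m n : ℤ) : Type := PresentedGroup (BSrel m n)

/-- The generator `a` of `B(m,n)`. -/
def BSa (m n : ℤ) : BS m n := PresentedGroup.of false

/-- The generator `b` of `B(m,n)`. -/
def BSb (m n : ℤ) : BS m n := PresentedGroup.of true

/-! `B(n,n)` is isomorphic to `F(ℤ/n) ⋊ ℤ`, where `b` generates `ℤ`, which shifts the indices
of the free generators, and `a` is the free generator of index `0`; the inverse sends the
generator of index `i` to `bⁱ a b⁻ⁱ`, well defined because `bⁿ` commutes with `a`. If `(w, k)` is
central in the semidirect product, commuting with the generator of `ℤ` makes `w` fixed by a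
fixed-point-free relabelling of the letters, so `w = 1` (compare first letters of the reduced
words); commuting with the free generator of index `0` then forces `n ∣ k`. -/

open FreeGroup SemidirectProduct Multiplicative

namespace FreeGroup

variable {α β : Type*} [DecidableEq α] [DecidableEq β]

theorem toWord_map_of_injective {f : α → β} (hf : Function.Injective f) (w : FreeGroup α) :
    (map f w).toWord = w.toWord.map fun p => (f p.1, p.2) := by
  conv_lhs => rw [← mk_toWord (x := w)]
  rw [map.mk, toWord_mk]
  exact IsReduced.reduce_eq <|
    (List.isChain_map _).2 <| isReduced_toWord.imp fun _ _ h heq => h (hf heq)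

theorem eq_one_of_map_eq_self {f : α → α} (hf : Function.Injective f) (hfix : ∀ x, f x ≠ x)
    {w : FreeGroup α} (h : map f w = w) : w = 1 := by
  have hword := congrArg toWord h
  rw [toWord_map_of_injective hf] at hword
  rw [← toWord_eq_nil_iff]
  cases hw : w.toWord with
  | nil => rfl
  | cons p _ =>
    rw [hw, List.map_cons, List.cons.injEq] at hword
    exact absurd (congrArg Prod.fst hword.1) (hfix p.1)

end FreeGroup

namespace SemidirectProduct

theorem inr_mem_center {N G : Type*} [Group N] [Group G] {φ : G →* MulAut N} {g : G}
    (hg : g ∈ Subgroup.center G) (hφ : φ g = 1) : inr g ∈ Subgroup.center (N ⋊[φ] G) := by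
  refine Subgroup.mem_center_iff.2 fun x => ?_
  ext
  · simp [mul_left, hφ]
  · simp [mul_right, Subgroup.mem_center_iff.1 hg x.right]

theorem inr_ofAdd_one_zpow {N : Type*} [Group N] {φ : Multiplicative ℤ →* MulAut N} (k : ℤ) :
    (inr (ofAdd 1) : N ⋊[φ] Multiplicative ℤ) ^ k = inr (ofAdd k) := by
  rw [← map_zpow, ← ofAdd_zsmul, zsmul_one, Int.cast_id]

end SemidirectProduct

def cyclicShift (n : ℕ) : Multiplicative ℤ →* MulAut (FreeGroup (ZMod n)) where
  toFun k := freeGroupCongr (Equiv.addRight (k.toAdd : ZMod n))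
  map_one' := by ext; simp
  map_mul' k l := by
    ext; simp [map.comp, Function.comp_def, add_assoc, add_comm (l.toAdd : ZMod n)]

section CyclicShift

variable (n : ℕ)

theorem cyclicShift_apply (k : Multiplicative ℤ) (w : FreeGroup (ZMod n)) :
    cyclicShift n k w = map (· + (k.toAdd : ZMod n)) w :=
  rfl

@[simp]
theorem cyclicShift_apply_of (k : Multiplicative ℤ) (i : ZMod n) :
    cyclicShift n k (of i) = of (i + k.toAdd) := by
  simp [cyclicShift]

theorem cyclicShift_ofAdd_natCast : cyclicShift n (ofAdd (n : ℤ)) = 1 := by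
  ext; simp [cyclicShift]

theorem inr_ofAdd_natCast_mem_center :
    (inr (ofAdd (n : ℤ)) : FreeGroup (ZMod n) ⋊[cyclicShift n] Multiplicative ℤ) ∈
      Subgroup.center _ :=
  inr_mem_center (Subgroup.mem_center_iff.2 fun _ => mul_comm _ _) (cyclicShift_ofAdd_natCast n)

theorem center_cyclicShift_semidirectProduct [Nontrivial (ZMod n)] :
    Subgroup.center (FreeGroup (ZMod n) ⋊[cyclicShift n] Multiplicative ℤ) =
      Subgroup.zpowers (inr (ofAdd (n : ℤ))) := by
  refine le_antisymm (fun z hz => ?_) (Subgroup.zpowers_le.2 (inr_ofAdd_natCast_mem_center n))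
  rw [Subgroup.mem_center_iff] at hz
  have hleft : z.left = 1 := by
    have hfix := congrArg left (hz (inr (ofAdd 1)))
    simp only [mul_left, left_inr, right_inr, one_mul, _root_.map_one, mul_one,
      cyclicShift_apply, toAdd_ofAdd, Int.cast_one] at hfix
    exact eq_one_of_map_eq_self (add_left_injective _) (fun i => by simp) hfix
  have hright : (n : ℤ) ∣ z.right.toAdd := by
    have hof := congrArg left (hz (inl (of 0)))
    simp only [mul_left, left_inl, right_inl, _root_.map_one, hleft, mul_one,
      cyclicShift_apply_of, zero_add, one_mul] at hof
    rw [← ZMod.intCast_zmod_eq_zero_iff_dvd]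
    exact of_injective hof.symm
  obtain ⟨j, hj⟩ := hright
  refine ⟨j, ?_⟩
  change inr (ofAdd (n : ℤ)) ^ j = z
  rw [← map_zpow, ← ofAdd_zsmul]
  ext
  · rw [left_inr, hleft]
  · rw [right_inr, hj, smul_eq_mul, mul_comm]; rfl

end CyclicShift

namespace BS

theorem BSa_inv_mul_BSb_zpow_mul_BSa (m n : ℤ) :
    (BSa m n)⁻¹ * BSb m n ^ m * BSa m n = BSb m n ^ n :=
  eq_of_mul_inv_eq_one (PresentedGroup.one_of_mem (Set.mem_singleton _))

theorem commute_BSb_zpow_BSa (n : ℤ) : Commute (BSb n n ^ n) (BSa n n) := by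
  have h := BSa_inv_mul_BSb_zpow_mul_BSa n n
  rwa [mul_assoc, inv_mul_eq_iff_eq_mul] at h

theorem conj_BSb_zpow_BSa_congr {n s t : ℤ} (h : s ≡ t [ZMOD n]) :
    MulAut.conj (BSb n n ^ s) (BSa n n) = MulAut.conj (BSb n n ^ t) (BSa n n) := by
  obtain ⟨j, hj⟩ := h.dvd
  rw [show t = s + n * j by omega, zpow_add, zpow_mul, _root_.map_mul, MulAut.mul_apply,
    MulAut.conj_apply ((BSb n n ^ n) ^ j), ((commute_BSb_zpow_BSa n).zpow_left j).mul_inv_cancel]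

variable (n : ℕ)

def toSemidirect : BS n n →* FreeGroup (ZMod n) ⋊[cyclicShift n] Multiplicative ℤ :=
  PresentedGroup.toGroup (f := fun x => cond x (inr (ofAdd 1)) (inl (of 0))) <| by
    rintro _ rfl
    have hc := Subgroup.mem_center_iff.1 (inr_ofAdd_natCast_mem_center n) (inl (of 0))
    simp only [_root_.map_mul, _root_.map_inv, map_zpow, lift_apply_of, cond_true, cond_false,
      inr_ofAdd_one_zpow]
    rw [mul_assoc _ (inr _), ← hc]
    group

@[simp]
theorem toSemidirect_BSa : toSemidirect n (BSa n n) = inl (of 0) :=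
  PresentedGroup.toGroup.of _

@[simp]
theorem toSemidirect_BSb : toSemidirect n (BSb n n) = inr (ofAdd 1) :=
  PresentedGroup.toGroup.of _

theorem toSemidirect_BSb_zpow (k : ℤ) : toSemidirect n (BSb n n ^ k) = inr (ofAdd k) := by
  rw [map_zpow, toSemidirect_BSb, inr_ofAdd_one_zpow]

def ofSemidirect : FreeGroup (ZMod n) ⋊[cyclicShift n] Multiplicative ℤ →* BS n n :=
  SemidirectProduct.lift (FreeGroup.lift fun i => MulAut.conj (BSb n n ^ (i.cast : ℤ)) (BSa n n))
    (zpowersHom _ (BSb n n)) fun k => FreeGroup.ext_hom _ _ fun i => by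
      simp only [MonoidHom.comp_apply, MulEquiv.coe_toMonoidHom, cyclicShift_apply_of,
        lift_apply_of, zpowersHom_apply, ← MulAut.mul_apply, ← _root_.map_mul, ← zpow_add]
      exact conj_BSb_zpow_BSa_congr ((ZMod.intCast_eq_intCast_iff _ _ _).1 (by simp [add_comm]))

@[simp]
theorem ofSemidirect_inl_of (i : ZMod n) :
    ofSemidirect n (inl (of i)) = MulAut.conj (BSb n n ^ (i.cast : ℤ)) (BSa n n) := by
  simp [ofSemidirect]

@[simp]
theorem ofSemidirect_inr (k : Multiplicative ℤ) : ofSemidirect n (inr k) = BSb n n ^ k.toAdd := by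
  simp [ofSemidirect]

theorem toSemidirect_ofSemidirect_inl_of (i : ZMod n) :
    toSemidirect n (ofSemidirect n (inl (of i))) = inl (of i) := by
  rw [ofSemidirect_inl_of, MulAut.conj_apply, _root_.map_mul, _root_.map_mul, _root_.map_inv,
    toSemidirect_BSa, toSemidirect_BSb_zpow, ← _root_.map_inv, ← inl_aut, cyclicShift_apply_of]
  simp

def equivSemidirect : BS n n ≃* FreeGroup (ZMod n) ⋊[cyclicShift n] Multiplicative ℤ :=
  (toSemidirect n).toMulEquiv (ofSemidirect n)
    (PresentedGroup.ext fun x => by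
      cases x
      · change ofSemidirect n (toSemidirect n (BSa n n)) = BSa n n
        simp
      · change ofSemidirect n (toSemidirect n (BSb n n)) = BSb n n
        simp)
    (hom_ext (FreeGroup.ext_hom _ _ (toSemidirect_ofSemidirect_inl_of n))
      (MonoidHom.ext_mint (by simp)))

theorem equivSemidirect_apply (x : BS n n) : equivSemidirect n x = toSemidirect n x :=
  rfl

end BS

open BS in
/-- For `m > 1`, the center of `B(m,m)` is the infinite cyclic subgroup generated
by `bᵐ`. -/
theorem BS_m_m_center (m : ℤ) (hm : 1 < m) :
    Subgroup.center (BS m m) = Subgroup.zpowers (BSb m m ^ m) ∧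
      ¬ IsOfFinOrder (BSb m m ^ m) := by
  lift m to ℕ using by omega
  have : Nontrivial (ZMod m) := ZMod.nontrivial_iff.2 (by omega)
  let e := equivSemidirect m
  have he : e (BSb m m ^ (m : ℤ)) = inr (ofAdd (m : ℤ)) := by
    rw [equivSemidirect_apply, toSemidirect_BSb_zpow]
  constructor
  · ext z
    have hc : e z ∈ Subgroup.center _ ↔ z ∈ Subgroup.center _ :=
      MulEquivClass.apply_mem_center_iff e
    rw [← hc, center_cyclicShift_semidirectProduct, ← he]
    simp only [Subgroup.mem_zpowers_iff, ← map_zpow, e.injective.eq_iff]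
  · intro hfin
    have h := ((rightHom.comp (toSemidirect m)).isOfFinOrder hfin).eq_one'
    rw [MonoidHom.comp_apply, toSemidirect_BSb_zpow, rightHom_inr, ofAdd_eq_one] at h
    omega
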